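/- The minimum of the max-plus Rayleigh quotient at an eigenvector: if x₀ is a max-plus eigenvector of A with eigenvalue λ, then x₀⁻ A x₀ = maxᵢ,ⱼ(aᵢⱼ + (x₀)ⱼ - (x₀)ᵢ) = λ, so min over x of x⁻Ax equals λ. -/
import Mathlib


noncomputable def msup {n : ℕ} (hn : 0 < n) (f : Fin n → ℝ) : ℝ :=
  Finset.univ.sup' (Finset.univ_nonempty_iff.mpr (Fin.pos_iff_nonempty.mp hn)) f

noncomputable def minf {n : ℕ} (hn : 0 < n) (f : Fin n → ℝ) : ℝ :=
  Finset.univ.inf' (Finset.univ_nonempty_iff.mpr (Fin.pos_iff_nonempty.mp hn)) f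

noncomputable def mpMul {n : ℕ} (hn : 0 < n) (A B : Fin n → Fin n → ℝ) :
    Fin n → Fin n → ℝ :=
  fun i j => msup hn (fun k => A i k + B k j)

noncomputable def mpPow {n : ℕ} (hn : 0 < n) (A : Fin n → Fin n → ℝ) : ℕ → Fin n → Fin n → ℝ
  | 0 => A
  | 1 => A
  | (m + 2) => mpMul hn A (mpPow hn A (m + 1))

lemma msup_sub {n : ℕ} (hn : 0 < n) (f : Fin n → ℝ) (c : ℝ) :
    msup hn (fun j => f j - c) = msup hn f - c := by
  unfold msup
  simp_rw [sub_eq_add_neg]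
  rw [← Finset.sup'_add]

lemma le_msup {n : ℕ} (hn : 0 < n) (f : Fin n → ℝ) (i : Fin n) : f i ≤ msup hn f :=
  Finset.le_sup' f (Finset.mem_univ i)

lemma msup_exists {n : ℕ} (hn : 0 < n) (f : Fin n → ℝ) : ∃ i, msup hn f = f i := by
  obtain ⟨i, _, h⟩ := Finset.exists_mem_eq_sup' (Finset.univ_nonempty_iff.mpr (Fin.pos_iff_nonempty.mp hn)) f
  exact ⟨i, h⟩

theorem stmt7 {n : ℕ} (hn : 0 < n) (A : Fin n → Fin n → ℝ) (lam : ℝ)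
    (x₀ : Fin n → ℝ) (hx₀ : ∀ i, msup hn (fun j => A i j + x₀ j) = lam + x₀ i) :
    msup hn (fun i => msup hn (fun j => A i j + x₀ j - x₀ i)) = lam ∧
      ∀ x : Fin n → ℝ,
        msup hn (fun i => msup hn (fun j => A i j + x j - x i)) ≥ lam := by
  have hinner : ∀ i, msup hn (fun j => A i j + x₀ j - x₀ i) = lam := by
    intro i
    rw [msup_sub hn (fun j => A i j + x₀ j) (x₀ i), hx₀ i]
    ring
  constructor
  · simp only [hinner]
    obtain ⟨i, hi⟩ := msup_exists hn (fun _ : Fin n => lam)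
    exact hi
  · intro x
    obtain ⟨i, hi⟩ := msup_exists hn (fun i => x₀ i - x i)
    obtain ⟨j, hj⟩ := msup_exists hn (fun j => A i j + x₀ j)
    rw [hx₀ i] at hj
    have h1 : x₀ j - x j ≤ x₀ i - x i := by rw [← hi]; exact le_msup hn (fun i => x₀ i - x i) j
    have h2 : A i j + x j - x i ≥ lam := by linarith
    calc lam ≤ A i j + x j - x i := h2
      _ ≤ msup hn (fun j => A i j + x j - x i) := le_msup hn (fun j => A i j + x j - x i) j
      _ ≤ _ := le_msup hn (fun i => msup hn (fun j => A i j + x j - x i)) i
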